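/- Consider the dissipative Hamiltonian operator pencil P(λ) = λE − BQ. The following four conditions are equivalent: (a) every λ0 ∈ ℂ is an approximate singularity of P and there exist unit vectors x_n ∈ D(BQ) with E x_n → 0; (b) there exists λ0 ∈ ℂ with Re λ0 > 0 that is an approximate singularity of P; (c) there exist unit vectors x_n ∈ D(BQ) with E x_n → 0 and BQ x_n → 0; (d) P has a right approximate polynomial sequence. -/

import Mathlib

open Filter Topology
open scoped InnerProductSpace

noncomputable section

variable {X Y : Type*}
  [NormedAddCommGroup X] [InnerProductSpace ℂ X] [CompleteSpace X]
  [NormedAddCommGroup Y] [InnerProductSpace ℂ Y] [CompleteSpace Y]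

/-- Evaluation of the `X`-valued polynomial `p(λ) = ∑_{j=0}^k λ^j a_j` at `lam`. -/
def polyEval {Z : Type*} [AddCommGroup Z] [Module ℂ Z] (a : ℕ → Z) (k : ℕ) (lam : ℂ) : Z :=
  ∑ j ∈ Finset.range (k + 1), lam ^ j • a j

/-- Evaluation of the reversal `rev p(λ) = ∑_{j=0}^k λ^j a_{k-j}` at `lam`. -/
def revEval {Z : Type*} [AddCommGroup Z] [Module ℂ Z] (a : ℕ → Z) (k : ℕ) (lam : ℂ) : Z :=
  ∑ j ∈ Finset.range (k + 1), lam ^ j • a (k - j)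

/-- Application of the composition `BQ` (with domain `{x | Qx ∈ D(B)})`,
extended by `0` outside the domain. -/
noncomputable def BQap (Q : X →L[ℂ] Y) (B : Y →ₗ.[ℂ] Y) (x : X) : Y :=
  haveI := Classical.dec (Q x ∈ B.domain)
  if h : Q x ∈ B.domain then B ⟨Q x, h⟩ else 0

/-- `lam` is an approximate singularity of the pencil `P(λ) = λE - BQ`:
there are unit vectors `xₙ ∈ D(BQ)` with `(λE - BQ) xₙ → 0`. -/
def IsApproxSingularity (E Q : X →L[ℂ] Y) (B : Y →ₗ.[ℂ] Y) (lam : ℂ) : Prop :=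
  ∃ x : ℕ → X, (∀ n, Q (x n) ∈ B.domain) ∧ (∀ n, ‖x n‖ = 1) ∧
    Tendsto (fun n => lam • E (x n) - BQap Q B (x n)) atTop (𝓝 (0 : Y))

/-- The polynomials `p_n(λ) = ∑_{j=0}^{k n} λ^j (a n j)` form a right approximate
polynomial sequence for the pencil `λE - BQ`. -/
def IsRAPS (E Q : X →L[ℂ] Y) (B : Y →ₗ.[ℂ] Y) (k : ℕ → ℕ) (a : ℕ → ℕ → X) : Prop :=
  (∀ (n : ℕ) (lam : ℂ),
      Q (polyEval (a n) (k n) lam) ∈ B.domain ∧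
      Q (revEval (a n) (k n) lam) ∈ B.domain) ∧
  ∀ lam : ℂ,
    (∀ n, polyEval (a n) (k n) lam ≠ 0) ∧
    (∀ n, revEval (a n) (k n) lam ≠ 0) ∧
    ¬ Tendsto (fun n => ‖polyEval (a n) (k n) lam‖) atTop (𝓝 (0 : ℝ)) ∧
    ¬ Tendsto (fun n => ‖revEval (a n) (k n) lam‖) atTop (𝓝 (0 : ℝ)) ∧
    Tendsto (fun n => lam • E (polyEval (a n) (k n) lam) -
      BQap Q B (polyEval (a n) (k n) lam)) atTop (𝓝 (0 : Y)) ∧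
    Tendsto (fun n => lam • BQap Q B (revEval (a n) (k n) lam) -
      E (revEval (a n) (k n) lam)) atTop (𝓝 (0 : Y))
/-!
For `Re λ > 0` and `y = (λE - BQ) x`, dissipativity of `B` gives
`Re λ · Re ⟪Q*E x, x⟫ ≤ Re ⟪Q x, y⟫`. Along an approximate singularity the quadratic form of the
nonnegative operator `Q*E` therefore tends to `0`; writing `Q*E = S²` with `S = √(Q*E)` this means
`S xₙ → 0`, hence `Q*E xₙ → 0`, so `E xₙ → 0` (as `Q*` is invertible) and finally `BQ xₙ → 0`.
Such a sequence makes every `λ` an approximate singularity and yields a right approximate polynomial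
sequence of constant polynomials. Conversely, normalising a subsequence of `pₙ(λ)` that stays away
from `0` shows that every `λ` is an approximate singularity.
-/
theorem ContinuousLinearMap.IsPositive.tendsto_zero_of_tendsto_re_inner
    {H : Type*} [NormedAddCommGroup H] [InnerProductSpace ℂ H] [CompleteSpace H]
    {T : H →L[ℂ] H} (hT : T.IsPositive) {ι : Type*} {l : Filter ι} {x : ι → H}
    (h : Tendsto (fun i => (⟪T (x i), x i⟫_ℂ).re) l (𝓝 0)) :
    Tendsto (fun i => T (x i)) l (𝓝 0) := by
  set S := CFC.sqrt T
  have hS : S.IsPositive := (ContinuousLinearMap.nonneg_iff_isPositive S).1 (CFC.sqrt_nonneg T)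
  have hSS : ∀ z, S (S z) = T z := fun z => by
    rw [← CFC.sqrt_mul_sqrt_self T ((ContinuousLinearMap.nonneg_iff_isPositive T).2 hT)]; rfl
  have hnorm_sq : ∀ z, ‖S z‖ ^ 2 = (⟪T z, z⟫_ℂ).re := fun z => by
    rw [← hSS, hS.inner_left_eq_inner_right, ← inner_self_eq_norm_sq (𝕜 := ℂ)]
    rfl
  have hSx : Tendsto (fun i => S (x i)) l (𝓝 0) := by
    rw [tendsto_zero_iff_norm_tendsto_zero]
    simpa [← hnorm_sq, Real.sqrt_sq (norm_nonneg _)] using h.sqrt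
  simpa only [Function.comp_def, hSS, map_zero] using (S.continuous.tendsto 0).comp hSx

section

variable {V W : Type*} [NormedAddCommGroup V] [InnerProductSpace ℂ V]
  [NormedAddCommGroup W] [InnerProductSpace ℂ W]

theorem BQap_of_mem (Q : V →L[ℂ] W) (B : W →ₗ.[ℂ] W) {x : V} (h : Q x ∈ B.domain) :
    BQap Q B x = B ⟨Q x, h⟩ :=
  dif_pos h

theorem BQap_smul (Q : V →L[ℂ] W) (B : W →ₗ.[ℂ] W) (c : ℂ) (x : V) :
    BQap Q B (c • x) = c • BQap Q B x := by
  by_cases hx : Q x ∈ B.domain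
  · have hcx : Q (c • x) ∈ B.domain := by rw [map_smul]; exact B.domain.smul_mem c hx
    rw [BQap_of_mem Q B hcx, BQap_of_mem Q B hx, ← B.map_smul]
    congr 1
    ext
    simp
  · rcases eq_or_ne c 0 with rfl | hc
    · rw [zero_smul, zero_smul, BQap_of_mem Q B (by simp)]
      convert B.map_zero using 2
      ext
      simp
    · have hcx : Q (c • x) ∉ B.domain := fun h => hx <| by
        simpa [hc] using B.domain.smul_mem c⁻¹ h
      simp only [BQap, hx, hcx, dif_neg, not_false_eq_true, smul_zero]

theorem pencil_smul (E Q : V →L[ℂ] W) (B : W →ₗ.[ℂ] W) (lam c : ℂ) (x : V) :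
    lam • E (c • x) - BQap Q B (c • x) = c • (lam • E x - BQap Q B x) := by
  rw [BQap_smul, map_smul, smul_sub, smul_comm]

theorem isApproxSingularity_of_tendsto_zero (E Q : V →L[ℂ] W) (B : W →ₗ.[ℂ] W) (lam : ℂ)
    {x : ℕ → V} (hdom : ∀ n, Q (x n) ∈ B.domain) (hnorm : ∀ n, ‖x n‖ = 1)
    (hE : Tendsto (fun n => E (x n)) atTop (𝓝 0))
    (hBQ : Tendsto (fun n => BQap Q B (x n)) atTop (𝓝 0)) :
    IsApproxSingularity E Q B lam :=
  ⟨x, hdom, hnorm, by simpa using (hE.const_smul lam).sub hBQ⟩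

theorem isApproxSingularity_of_not_tendsto_norm_zero (E Q : V →L[ℂ] W) (B : W →ₗ.[ℂ] W)
    (lam : ℂ) {p : ℕ → V} (hdom : ∀ n, Q (p n) ∈ B.domain)
    (hp : ¬ Tendsto (fun n => ‖p n‖) atTop (𝓝 0))
    (h : Tendsto (fun n => lam • E (p n) - BQap Q B (p n)) atTop (𝓝 0)) :
    IsApproxSingularity E Q B lam := by
  rw [Metric.tendsto_atTop] at hp
  push Not at hp
  obtain ⟨ε, hε, hfreq⟩ := hp
  obtain ⟨φ, hφ, hεφ⟩ := extraction_of_frequently_atTop (frequently_atTop.2 hfreq)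
  simp only [Real.dist_eq, sub_zero, abs_norm] at hεφ
  have hpφ : ∀ m, p (φ m) ≠ 0 := fun m => norm_pos_iff.1 (hε.trans_le (hεφ m))
  refine ⟨fun m => (‖p (φ m)‖ : ℂ)⁻¹ • p (φ m), fun m => ?_, fun m => norm_smul_inv_norm (hpφ m), ?_⟩
  · rw [map_smul]; exact B.domain.smul_mem _ (hdom (φ m))
  have hφ_lim := tendsto_zero_iff_norm_tendsto_zero.1 (h.comp hφ.tendsto_atTop)
  refine tendsto_zero_iff_norm_tendsto_zero.2 <|
    squeeze_zero (fun _ => norm_nonneg _) (fun m => ?_) (by simpa using hφ_lim.const_mul ε⁻¹)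
  rw [pencil_smul, norm_smul, norm_inv, Complex.norm_real, norm_norm]
  gcongr
  exact hεφ m

@[simp]
theorem polyEval_zero {Z : Type*} [AddCommGroup Z] [Module ℂ Z] (a : ℕ → Z) (lam : ℂ) :
    polyEval a 0 lam = a 0 := by
  simp [polyEval]

@[simp]
theorem revEval_zero {Z : Type*} [AddCommGroup Z] [Module ℂ Z] (a : ℕ → Z) (lam : ℂ) :
    revEval a 0 lam = a 0 := by
  simp [revEval]

theorem IsRAPS.isApproxSingularity {E Q : V →L[ℂ] W} {B : W →ₗ.[ℂ] W} {k : ℕ → ℕ}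
    {a : ℕ → ℕ → V} (h : IsRAPS E Q B k a) (lam : ℂ) : IsApproxSingularity E Q B lam :=
  isApproxSingularity_of_not_tendsto_norm_zero E Q B lam (fun n => (h.1 n lam).1)
    (h.2 lam).2.2.1 (h.2 lam).2.2.2.2.1

theorem isRAPS_const (E Q : V →L[ℂ] W) (B : W →ₗ.[ℂ] W) {x : ℕ → V}
    (hdom : ∀ n, Q (x n) ∈ B.domain) (hnorm : ∀ n, ‖x n‖ = 1)
    (hE : Tendsto (fun n => E (x n)) atTop (𝓝 0))
    (hBQ : Tendsto (fun n => BQap Q B (x n)) atTop (𝓝 0)) :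
    IsRAPS E Q B (fun _ => 0) (fun n _ => x n) := by
  have hx : ∀ n, x n ≠ 0 := fun n => norm_ne_zero_iff.1 (by simp [hnorm])
  have hnorm_lim : ¬ Tendsto (fun n => ‖x n‖) atTop (𝓝 0) := by simp [hnorm]
  refine ⟨fun n _ => by simpa using hdom n, fun lam => ?_⟩
  simp only [polyEval_zero, revEval_zero]
  exact ⟨hx, hx, hnorm_lim, hnorm_lim, by simpa using (hE.const_smul lam).sub hBQ,
    by simpa using (hBQ.const_smul lam).sub hE⟩

end

open ContinuousLinearMap in
theorem re_mul_re_inner_le_re_inner_pencil {E Q : X →L[ℂ] Y} {B : Y →ₗ.[ℂ] Y}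
    (hT : ((adjoint Q).comp E).IsPositive) (hBdiss : ∀ y : B.domain, (⟪B y, (y : Y)⟫_ℂ).re ≤ 0)
    (lam : ℂ) {x : X} (hx : Q x ∈ B.domain) :
    lam.re * (⟪((adjoint Q).comp E) x, x⟫_ℂ).re ≤ (⟪Q x, lam • E x - BQap Q B x⟫_ℂ).re := by
  have hQE : ⟪Q x, E x⟫_ℂ = ⟪((adjoint Q).comp E) x, x⟫_ℂ := by
    rw [hT.inner_left_eq_inner_right, comp_apply, adjoint_inner_right]
  have him : (⟪((adjoint Q).comp E) x, x⟫_ℂ).im = 0 :=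
    (Complex.nonneg_iff.1 (hT.inner_nonneg_left x)).2.symm
  have hdiss : (⟪Q x, B ⟨Q x, hx⟩⟫_ℂ).re ≤ 0 :=
    (inner_re_symm (𝕜 := ℂ) (Q x) _).trans_le (hBdiss ⟨Q x, hx⟩)
  rw [inner_sub_right, inner_smul_right, BQap_of_mem Q B hx, Complex.sub_re, Complex.mul_re, hQE,
    him, mul_zero, sub_zero]
  linarith

open ContinuousLinearMap in
theorem tendsto_E_and_BQap_of_tendsto_pencil {E Q : X →L[ℂ] Y} {B : Y →ₗ.[ℂ] Y}
    (hQinv : ∃ Qi : Y →L[ℂ] X, ∀ y, Q (Qi y) = y) (hT : ((adjoint Q).comp E).IsPositive)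
    (hBdiss : ∀ y : B.domain, (⟪B y, (y : Y)⟫_ℂ).re ≤ 0) {lam : ℂ} (hlam : 0 < lam.re)
    {x : ℕ → X} (hdom : ∀ n, Q (x n) ∈ B.domain) (hnorm : ∀ n, ‖x n‖ ≤ 1)
    (h : Tendsto (fun n => lam • E (x n) - BQap Q B (x n)) atTop (𝓝 0)) :
    Tendsto (fun n => E (x n)) atTop (𝓝 0) ∧ Tendsto (fun n => BQap Q B (x n)) atTop (𝓝 0) := by
  set T := (adjoint Q).comp E
  obtain ⟨Qi, hQQi⟩ := hQinv
  have hE_eq : ∀ z, E z = adjoint Qi (T z) := fun z => ext_inner_left ℂ fun v => by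
    simp [T, adjoint_inner_right, hQQi]
  have hre : Tendsto (fun n => (⟪T (x n), x n⟫_ℂ).re) atTop (𝓝 0) := by
    refine squeeze_zero (fun n => hT.re_inner_nonneg_left (x n)) (fun n => ?_)
      (by simpa using ((tendsto_zero_iff_norm_tendsto_zero.1 h).const_mul ‖Q‖).div_const lam.re)
    rw [le_div_iff₀ hlam, mul_comm]
    calc lam.re * (⟪T (x n), x n⟫_ℂ).re
        ≤ (⟪Q (x n), lam • E (x n) - BQap Q B (x n)⟫_ℂ).re :=
          re_mul_re_inner_le_re_inner_pencil hT hBdiss lam (hdom n)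
      _ ≤ ‖Q (x n)‖ * ‖lam • E (x n) - BQap Q B (x n)‖ := by
          simpa only [RCLike.re_to_complex] using re_inner_le_norm (𝕜 := ℂ) (Q (x n)) _
      _ ≤ ‖Q‖ * ‖lam • E (x n) - BQap Q B (x n)‖ := by
          gcongr
          simpa using Q.le_opNorm_of_le (hnorm n)
  have hE : Tendsto (fun n => E (x n)) atTop (𝓝 0) := by
    simpa only [Function.comp_def, hE_eq, map_zero] using
      ((adjoint Qi).continuous.tendsto 0).comp (hT.tendsto_zero_of_tendsto_re_inner hre)
  exact ⟨hE, by simpa using (hE.const_smul lam).sub h⟩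

theorem stmt_16_general (E Q : X →L[ℂ] Y) (B : Y →ₗ.[ℂ] Y)
    (hQinv : ∃ Qi : Y →L[ℂ] X, (∀ x, Qi (Q x) = x) ∧ (∀ y, Q (Qi y) = y))
    (hQE : IsSelfAdjoint ((ContinuousLinearMap.adjoint Q).comp E))
    (hQEnn : ∀ x : X, 0 ≤ (⟪((ContinuousLinearMap.adjoint Q).comp E) x, x⟫_ℂ).re)
    (hBdiss : ∀ y : B.domain, (⟪B y, (y : Y)⟫_ℂ).re ≤ 0) :
    (((∀ lam0 : ℂ, IsApproxSingularity E Q B lam0) ∧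
        (∃ x : ℕ → X, (∀ n, Q (x n) ∈ B.domain) ∧ (∀ n, ‖x n‖ = 1) ∧
          Tendsto (fun n => E (x n)) atTop (𝓝 (0 : Y)))) ↔
      (∃ lam0 : ℂ, 0 < lam0.re ∧ IsApproxSingularity E Q B lam0)) ∧
    ((∃ lam0 : ℂ, 0 < lam0.re ∧ IsApproxSingularity E Q B lam0) ↔
      (∃ x : ℕ → X, (∀ n, Q (x n) ∈ B.domain) ∧ (∀ n, ‖x n‖ = 1) ∧
        Tendsto (fun n => E (x n)) atTop (𝓝 (0 : Y)) ∧
        Tendsto (fun n => BQap Q B (x n)) atTop (𝓝 (0 : Y)))) ∧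
    ((∃ x : ℕ → X, (∀ n, Q (x n) ∈ B.domain) ∧ (∀ n, ‖x n‖ = 1) ∧
        Tendsto (fun n => E (x n)) atTop (𝓝 (0 : Y)) ∧
        Tendsto (fun n => BQap Q B (x n)) atTop (𝓝 (0 : Y))) ↔
      (∃ (k : ℕ → ℕ) (a : ℕ → ℕ → X), IsRAPS E Q B k a)) := by
  have hT := ContinuousLinearMap.isPositive_def'.2 ⟨hQE, hQEnn⟩
  have hbc : (∃ lam0 : ℂ, 0 < lam0.re ∧ IsApproxSingularity E Q B lam0) →
      ∃ x : ℕ → X, (∀ n, Q (x n) ∈ B.domain) ∧ (∀ n, ‖x n‖ = 1) ∧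
        Tendsto (fun n => E (x n)) atTop (𝓝 (0 : Y)) ∧
        Tendsto (fun n => BQap Q B (x n)) atTop (𝓝 (0 : Y)) := by
    rintro ⟨lam0, hlam0, x, hdom, hnorm, h⟩
    exact ⟨x, hdom, hnorm, tendsto_E_and_BQap_of_tendsto_pencil (hQinv.imp fun _ h => h.2) hT
      hBdiss hlam0 hdom (fun n => (hnorm n).le) h⟩
  refine ⟨⟨fun ha => ⟨1, one_pos, ha.1 1⟩, fun hb => ?_⟩, ⟨hbc, ?_⟩, ⟨?_, ?_⟩⟩
  · obtain ⟨x, hdom, hnorm, hE, hBQ⟩ := hbc hb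
    exact ⟨fun lam => isApproxSingularity_of_tendsto_zero E Q B lam hdom hnorm hE hBQ,
      x, hdom, hnorm, hE⟩
  · rintro ⟨x, hdom, hnorm, hE, hBQ⟩
    exact ⟨1, one_pos, isApproxSingularity_of_tendsto_zero E Q B 1 hdom hnorm hE hBQ⟩
  · rintro ⟨x, hdom, hnorm, hE, hBQ⟩
    exact ⟨_, _, isRAPS_const E Q B hdom hnorm hE hBQ⟩
  · rintro ⟨k, a, h⟩
    exact hbc ⟨1, one_pos, h.isApproxSingularity 1⟩

/-- For the dissipative Hamiltonian pencil `P(λ) = λE - BQ` the following are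
equivalent: (a) every `λ0 ∈ ℂ` is an approximate singularity and `∞` is an approximate
singularity; (b) some `λ0` with `Re λ0 > 0` is an approximate singularity; (c) there are
unit vectors `xₙ ∈ D(BQ)` with `E xₙ → 0` and `BQ xₙ → 0`; (d) `P` has a right
approximate polynomial sequence. -/
theorem stmt_16 (E Q : X →L[ℂ] Y) (B : Y →ₗ.[ℂ] Y)
    (hQinv : ∃ Qi : Y →L[ℂ] X, (∀ x, Qi (Q x) = x) ∧ (∀ y, Q (Qi y) = y))
    (hQE : IsSelfAdjoint ((ContinuousLinearMap.adjoint Q).comp E))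
    (hQEnn : ∀ x : X, 0 ≤ (⟪((ContinuousLinearMap.adjoint Q).comp E) x, x⟫_ℂ).re)
    (hBdense : Dense (B.domain : Set Y)) (hBclosed : IsClosed (B.graph : Set (Y × Y)))
    (hBdiss : ∀ y : B.domain, (⟪B y, (y : Y)⟫_ℂ).re ≤ 0) :
    (((∀ lam0 : ℂ, IsApproxSingularity E Q B lam0) ∧
        (∃ x : ℕ → X, (∀ n, Q (x n) ∈ B.domain) ∧ (∀ n, ‖x n‖ = 1) ∧
          Tendsto (fun n => E (x n)) atTop (𝓝 (0 : Y)))) ↔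
      (∃ lam0 : ℂ, 0 < lam0.re ∧ IsApproxSingularity E Q B lam0)) ∧
    ((∃ lam0 : ℂ, 0 < lam0.re ∧ IsApproxSingularity E Q B lam0) ↔
      (∃ x : ℕ → X, (∀ n, Q (x n) ∈ B.domain) ∧ (∀ n, ‖x n‖ = 1) ∧
        Tendsto (fun n => E (x n)) atTop (𝓝 (0 : Y)) ∧
        Tendsto (fun n => BQap Q B (x n)) atTop (𝓝 (0 : Y)))) ∧
    ((∃ x : ℕ → X, (∀ n, Q (x n) ∈ B.domain) ∧ (∀ n, ‖x n‖ = 1) ∧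
        Tendsto (fun n => E (x n)) atTop (𝓝 (0 : Y)) ∧
        Tendsto (fun n => BQap Q B (x n)) atTop (𝓝 (0 : Y))) ↔
      (∃ (k : ℕ → ℕ) (a : ℕ → ℕ → X), IsRAPS E Q B k a)) :=
  stmt_16_general E Q B hQinv hQE hQEnn hBdiss
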